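/- arXiv:1706.01970 — 2 statements merged into one kernel-verified Lean document; each statement's English description precedes it below -/
import Mathlib

section
/- For a prime p and positive integer n with n ≡ 1 or n ≡ 5 (mod 6), the number of triples (A,B,C) of positive integers with A ≤ B ≤ C and A·B·C = p^n equals (n² + 6n + 5)/12. -/
open Finset

/-- Number of cuboids with integer edge lengths and volume `N`. -/
noncomputable def cuboidCount (N : ℕ) : ℕ :=
  Set.ncard {t : ℕ × ℕ × ℕ | 0 < t.1 ∧ t.1 ≤ t.2.1 ∧ t.2.1 ≤ t.2.2 ∧ t.1 * t.2.1 * t.2.2 = N}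

/-- Pairs (a,b) of exponents with a ≤ b and a + 2b ≤ n; the third exponent is n - a - b. -/
def expPairs (n : ℕ) : Finset (ℕ × ℕ) :=
  (Finset.range (n+1) ×ˢ Finset.range (n+1)).filter (fun q => q.1 ≤ q.2 ∧ q.1 + 2*q.2 ≤ n)

lemma mem_expPairs {n : ℕ} {q : ℕ × ℕ} :
    q ∈ expPairs n ↔ q.1 ≤ q.2 ∧ q.1 + 2*q.2 ≤ n := by
  simp only [expPairs, Finset.mem_filter, Finset.mem_product, Finset.mem_range]
  omega

lemma card_line (m i : ℕ) (him : 2*i ≤ m) :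
    ((expPairs m).filter (fun q => q.2 = q.1 + i)).card = (m - 2*i)/3 + 1 := by
  have heq : (expPairs m).filter (fun q => q.2 = q.1 + i)
      = (Finset.range ((m - 2*i)/3 + 1)).image (fun a => (a, a+i)) := by
    ext q
    simp only [Finset.mem_filter, mem_expPairs, Finset.mem_image, Finset.mem_range]
    constructor
    · rintro ⟨⟨h1, h2⟩, h3⟩
      exact ⟨q.1, by omega, by rw [← h3]⟩
    · rintro ⟨a, ha, rfl⟩
      refine ⟨⟨by omega, by omega⟩, rfl⟩
  rw [heq, Finset.card_image_of_injective _ (fun x y h => by simpa using (Prod.mk.injEq _ _ _ _ ▸ h).1),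
    Finset.card_range]

lemma card_step (n : ℕ) : (expPairs (n+6)).card = (expPairs n).card + (n+6) := by
  set m := n + 6 with hm
  have hsplit : (expPairs m).card
      = ((expPairs m).filter (fun q => q.1 + 3 ≤ q.2)).card
        + ((expPairs m).filter (fun q => ¬ (q.1 + 3 ≤ q.2))).card :=
    (Finset.card_filter_add_card_filter_not _).symm
  -- the big part is a shifted copy of expPairs n
  have hbig : (expPairs n).card = ((expPairs m).filter (fun q => q.1 + 3 ≤ q.2)).card := by
    apply Finset.card_bij (fun q _ => (q.1, q.2 + 3))
    · intro a ha
      simp only [Finset.mem_filter, mem_expPairs] at *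
      omega
    · intro a ha b hb h
      simp only [Prod.mk.injEq] at h
      exact Prod.ext h.1 (by omega)
    · intro b hb
      simp only [Finset.mem_filter, mem_expPairs] at hb
      exact ⟨(b.1, b.2 - 3), by simp only [mem_expPairs]; omega,
        Prod.ext rfl (by simp; omega)⟩
  -- the small part splits into three lines
  have hsmall : (expPairs m).filter (fun q => ¬ (q.1 + 3 ≤ q.2))
      = ((expPairs m).filter (fun q => q.2 = q.1 + 0))
        ∪ ((expPairs m).filter (fun q => q.2 = q.1 + 1))
        ∪ ((expPairs m).filter (fun q => q.2 = q.1 + 2)) := by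
    ext q
    simp only [Finset.mem_filter, Finset.mem_union, mem_expPairs]
    omega
  have hd1 : Disjoint (((expPairs m).filter (fun q => q.2 = q.1 + 0))
      ∪ ((expPairs m).filter (fun q => q.2 = q.1 + 1)))
      ((expPairs m).filter (fun q => q.2 = q.1 + 2)) := by
    rw [Finset.disjoint_left]
    intro q hq hq'
    simp only [Finset.mem_union, Finset.mem_filter] at hq hq'
    omega
  have hd2 : Disjoint ((expPairs m).filter (fun q => q.2 = q.1 + 0))
      ((expPairs m).filter (fun q => q.2 = q.1 + 1)) := by
    rw [Finset.disjoint_left]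
    intro q hq hq'
    simp only [Finset.mem_filter] at hq hq'
    omega
  have hc0 := card_line m 0 (by omega)
  have hc1 := card_line m 1 (by omega)
  have hc2 := card_line m 2 (by omega)
  rw [hsplit, ← hbig, hsmall, Finset.card_union_of_disjoint hd1,
    Finset.card_union_of_disjoint hd2, hc0, hc1, hc2]
  omega

lemma card_expPairs (n : ℕ) (hmod : n % 6 = 1 ∨ n % 6 = 5) :
    12 * (expPairs n).card = n^2 + 6*n + 5 := by
  induction n using Nat.strong_induction_on with
  | _ n ih =>
    rcases Nat.lt_or_ge n 6 with h6 | h6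
    · interval_cases n <;> simp_all <;> decide
    · obtain ⟨m, rfl⟩ : ∃ m, n = m + 6 := ⟨n - 6, by omega⟩
      have hm : m % 6 = 1 ∨ m % 6 = 5 := by omega
      have := ih m (by omega) hm
      have hstep := card_step m
      have hexp : (m+6)^2 + 6*(m+6) + 5 = (m^2 + 6*m + 5) + 12*(m+6) := by ring
      omega

lemma cuboidCount_eq (p n : ℕ) (hp : p.Prime) :
    cuboidCount (p ^ n) = (expPairs n).card := by
  have hp1 : 1 < p := hp.one_lt
  have hset : {t : ℕ × ℕ × ℕ | 0 < t.1 ∧ t.1 ≤ t.2.1 ∧ t.2.1 ≤ t.2.2 ∧ t.1 * t.2.1 * t.2.2 = p ^ n}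
      = ↑((expPairs n).image (fun q => (p ^ q.1, p ^ q.2, p ^ (n - q.1 - q.2)))) := by
    ext ⟨A, B, C⟩
    simp only [Set.mem_setOf_eq, Finset.coe_image, Set.mem_image, Finset.mem_coe, mem_expPairs]
    constructor
    · rintro ⟨hA, hAB, hBC, habc⟩
      have hB : 0 < B := lt_of_lt_of_le hA hAB
      have hC : 0 < C := lt_of_lt_of_le hB hBC
      obtain ⟨a, ha, rfl⟩ := (Nat.dvd_prime_pow hp).mp ⟨B * C, by rw [← habc]; ring⟩
      obtain ⟨b, hb, rfl⟩ := (Nat.dvd_prime_pow hp).mp (⟨p ^ a * C, by rw [← habc]; ring⟩ : B ∣ p ^ n)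
      obtain ⟨c, hc, rfl⟩ := (Nat.dvd_prime_pow hp).mp (⟨p ^ a * p ^ b, by rw [← habc]; ring⟩ : C ∣ p ^ n)
      rw [← pow_add, ← pow_add] at habc
      have hsum : a + b + c = n := Nat.pow_right_injective hp.two_le habc
      have hab : a ≤ b := (Nat.pow_le_pow_iff_right hp1).mp hAB
      have hbc : b ≤ c := (Nat.pow_le_pow_iff_right hp1).mp hBC
      refine ⟨(a, b), ⟨hab, by omega⟩, ?_⟩
      have hcc : n - a - b = c := by omega
      rw [hcc]
    · rintro ⟨⟨a, b⟩, ⟨hab, h2⟩, heq⟩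
      obtain ⟨rfl, rfl, rfl⟩ : p ^ a = A ∧ p ^ b = B ∧ p ^ (n - a - b) = C := by
        simpa [Prod.ext_iff] using heq
      refine ⟨pow_pos hp.pos a, Nat.pow_le_pow_right hp.pos hab,
        Nat.pow_le_pow_right hp.pos (by omega), ?_⟩
      rw [← pow_add, ← pow_add]
      congr 1
      omega
  rw [cuboidCount, hset, Set.ncard_coe_finset]
  apply Finset.card_image_of_injOn
  intro q1 h1 q2 h2 h
  simp only [Prod.mk.injEq] at h
  have inj := Nat.pow_right_injective hp.two_le
  exact Prod.ext (inj h.1) (inj h.2.1)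

theorem cuboid_count_prime_pow (p n : ℕ) (hp : p.Prime) (hn : 0 < n)
    (hmod : n % 6 = 1 ∨ n % 6 = 5) :
    (cuboidCount (p ^ n) : ℚ) = ((n : ℚ) ^ 2 + 6 * n + 5) / 12 := by
  have h12 := card_expPairs n hmod
  rw [cuboidCount_eq p n hp]
  have : (12 : ℚ) * (expPairs n).card = (n : ℚ)^2 + 6*n + 5 := by
    exact_mod_cast congrArg (Nat.cast : ℕ → ℚ) h12
  field_simp
  linarith
end

section
/- Let p ≠ q be primes and n, m positive integers with n ≡ 1 or 5 (mod 6) and m ≡ 1, 3, or 5 (mod 6). Then the number of triples (A,B,C) of positive integers with A ≤ B ≤ C and A·B·C = p^n·q^m equals (n+1)(m+1)(nm+2n+2m+7)/24. -/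
open Finset

def sort3 (t : ℕ × ℕ × ℕ) : ℕ × ℕ × ℕ :=
  (min t.1 (min t.2.1 t.2.2), max (min t.1 t.2.1) (min (max t.1 t.2.1) t.2.2),
    max t.1 (max t.2.1 t.2.2))

def perms3 (t : ℕ × ℕ × ℕ) : Finset (ℕ × ℕ × ℕ) :=
  {(t.1, t.2.1, t.2.2), (t.1, t.2.2, t.2.1), (t.2.1, t.1, t.2.2), (t.2.1, t.2.2, t.1),
    (t.2.2, t.1, t.2.1), (t.2.2, t.2.1, t.1)}

lemma sort3_mem_perms3 (t : ℕ × ℕ × ℕ) : sort3 t ∈ perms3 t := by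
  obtain ⟨a, b, c⟩ := t
  simp only [sort3, perms3, mem_insert, mem_singleton, Prod.mk.injEq]
  omega

lemma sort3_eq_iff_mem_perms3 {s t : ℕ × ℕ × ℕ} (hs : s.1 ≤ s.2.1 ∧ s.2.1 ≤ s.2.2) :
    sort3 t = s ↔ t ∈ perms3 s := by
  obtain ⟨a, b, c⟩ := s
  obtain ⟨x, y, z⟩ := t
  simp only [sort3, perms3, mem_insert, mem_singleton, Prod.mk.injEq] at hs ⊢
  omega

lemma card_perms3_add_mul_card_filter_eq_six {a b c : ℕ} (hab : a ≤ b) (hbc : b ≤ c) :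
    #(perms3 (a, b, c)) + 3 * #((perms3 (a, b, c)).filter fun t => t.1 = t.2.1) +
      2 * #((perms3 (a, b, c)).filter fun t => t.1 = t.2.1 ∧ t.2.1 = t.2.2) = 6 := by
  rcases hab.lt_or_eq with hab | rfl <;> rcases hbc.lt_or_eq with hbc | rfl
  · have hac := hab.trans hbc
    simp [perms3, filter_insert, filter_singleton, hab.ne, hbc.ne, hac.ne, hab.ne', hbc.ne',
      hac.ne']
  · simp [perms3, filter_insert, filter_singleton, hab.ne, hab.ne']
  · simp [perms3, filter_insert, filter_singleton, hbc.ne, hbc.ne']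
  · simp [perms3, filter_singleton]

def IsSymmetricTripleSet (T : Finset (ℕ × ℕ × ℕ)) : Prop :=
  ∀ a b c, (a, b, c) ∈ T → (b, a, c) ∈ T ∧ (a, c, b) ∈ T

namespace IsSymmetricTripleSet

variable {T : Finset (ℕ × ℕ × ℕ)} (hT : IsSymmetricTripleSet T)
include hT

lemma perms3_subset {t : ℕ × ℕ × ℕ} (ht : t ∈ T) : perms3 t ⊆ T := by
  obtain ⟨a, b, c⟩ := t
  have h₁ := hT _ _ _ ht
  have h₂ := hT _ _ _ h₁.1
  have h₃ := hT _ _ _ h₁.2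
  have h₄ := hT _ _ _ h₂.2
  intro t ht
  simp only [perms3, mem_insert, mem_singleton] at ht
  rcases ht with rfl | rfl | rfl | rfl | rfl | rfl
  exacts [ht, h₁.2, h₁.1, h₂.2, h₃.1, h₄.1]

lemma card_filter_eq_sum_perms3 (P : ℕ × ℕ × ℕ → Prop) [DecidablePred P] :
    #(T.filter P) =
      ∑ s ∈ T.filter (fun t => t.1 ≤ t.2.1 ∧ t.2.1 ≤ t.2.2), #((perms3 s).filter P) := by
  refine (card_eq_sum_card_fiberwise (f := sort3) fun t ht => ?_).trans
    (sum_congr rfl fun s hs => ?_)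
  · obtain ⟨ht, -⟩ := mem_filter.1 ht
    refine mem_filter.2 ⟨hT.perms3_subset ht (sort3_mem_perms3 t), ?_⟩
    simp only [sort3]
    omega
  · obtain ⟨hs, hsorted⟩ := mem_filter.1 hs
    congr 1
    ext t
    simp only [mem_filter, sort3_eq_iff_mem_perms3 hsorted]
    constructor
    · rintro ⟨⟨-, hP⟩, hst⟩
      exact ⟨hst, hP⟩
    · rintro ⟨hst, hP⟩
      exact ⟨⟨hT.perms3_subset hs hst, hP⟩, hst⟩

/-- Burnside's lemma for `S₃` permuting the coordinates: each of the three transpositions fixes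
`#{(a, a, c) ∈ T}` triples and each of the two `3`-cycles fixes the constant ones. -/
theorem card_add_eq_six_mul_card_sorted :
    #T + 3 * #(T.filter fun t => t.1 = t.2.1) +
        2 * #(T.filter fun t => t.1 = t.2.1 ∧ t.2.1 = t.2.2) =
      6 * #(T.filter fun t => t.1 ≤ t.2.1 ∧ t.2.1 ≤ t.2.2) := by
  have hcard : #T = ∑ s ∈ T.filter (fun t => t.1 ≤ t.2.1 ∧ t.2.1 ≤ t.2.2), #(perms3 s) := by
    simpa only [filter_true] using hT.card_filter_eq_sum_perms3 fun _ => True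
  rw [hcard, hT.card_filter_eq_sum_perms3, hT.card_filter_eq_sum_perms3, mul_sum, mul_sum,
    ← sum_add_distrib, ← sum_add_distrib]
  refine (sum_const_nat fun ⟨a, b, c⟩ hs => ?_).trans (mul_comm _ _)
  obtain ⟨-, hab, hbc⟩ := mem_filter.1 hs
  exact card_perms3_add_mul_card_filter_eq_six hab hbc

end IsSymmetricTripleSet

def sumTriples (k : ℕ) : Finset (ℕ × ℕ × ℕ) :=
  (range (k + 1) ×ˢ range (k + 1) ×ˢ range (k + 1)).filter fun t => t.1 + t.2.1 + t.2.2 = k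

@[simp]
lemma mem_sumTriples {k : ℕ} {t : ℕ × ℕ × ℕ} : t ∈ sumTriples k ↔ t.1 + t.2.1 + t.2.2 = k := by
  simp only [sumTriples, mem_filter, mem_product, mem_range]
  omega

lemma card_sumTriples_filter_fst_eq_const {k a : ℕ} (ha : a ≤ k) :
    #((sumTriples k).filter fun t => t.1 = a) = k - a + 1 := by
  rw [← Nat.card_antidiagonal (k - a)]
  refine card_nbij' Prod.snd (fun x => (a, x)) ?_ ?_ ?_ ?_
  · rintro ⟨x, y, z⟩ h; simp_all; omega
  · rintro ⟨y, z⟩ h; simp_all; omega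
  · rintro ⟨x, y, z⟩ h; simp_all
  · intro x h; rfl

lemma card_sumTriples (k : ℕ) : #(sumTriples k) * 2 = (k + 1) * (k + 2) := by
  have hfibers : #(sumTriples k) = ∑ a ∈ range (k + 1), (k - a + 1) := by
    refine (card_eq_sum_card_fiberwise fun t ht => ?_).trans
      (sum_congr rfl fun a ha => card_sumTriples_filter_fst_eq_const ?_)
    · simp only [mem_sumTriples, coe_range, Set.mem_Iio, mem_coe] at ht ⊢
      omega
    · simp only [mem_range] at ha
      omega
  have hsum : ∑ a ∈ range (k + 1), (k - a + 1) = ∑ i ∈ range (k + 2), i := by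
    rw [← sum_range_reflect, sum_range_succ' (fun i => i)]
    exact sum_congr rfl fun i hi => by simp only [mem_range] at hi; omega
  rw [hfibers, hsum, sum_range_id_mul_two, mul_comm]
  rfl

lemma card_sumTriples_filter_fst_eq (k : ℕ) :
    #((sumTriples k).filter fun t => t.1 = t.2.1) = k / 2 + 1 := by
  rw [← card_range (k / 2 + 1)]
  refine card_nbij' Prod.fst (fun i => (i, i, k - 2 * i)) ?_ ?_ ?_ ?_
  · rintro ⟨x, y, z⟩ h; simp_all; omega
  · intro i h; simp_all; omega
  · rintro ⟨x, y, z⟩ h; simp_all; omega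
  · intro i h; rfl

lemma sumTriples_filter_const_eq_empty {k : ℕ} (hk : ¬ 3 ∣ k) :
    (sumTriples k).filter (fun t => t.1 = t.2.1 ∧ t.2.1 = t.2.2) = ∅ := by
  refine filter_false_of_mem fun ⟨a, b, c⟩ ht ⟨hab, hbc⟩ => hk ⟨a, ?_⟩
  simp only [mem_sumTriples] at ht hab hbc
  omega

def tripleFactorizations (N : ℕ) : Finset (ℕ × ℕ × ℕ) :=
  (N.divisors ×ˢ N.divisors ×ˢ N.divisors).filter fun t => t.1 * t.2.1 * t.2.2 = N

lemma mem_tripleFactorizations {N : ℕ} (hN : N ≠ 0) {t : ℕ × ℕ × ℕ} :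
    t ∈ tripleFactorizations N ↔ t.1 * t.2.1 * t.2.2 = N := by
  obtain ⟨a, b, c⟩ := t
  simp only [tripleFactorizations, mem_filter, mem_product, Nat.mem_divisors,
    and_iff_right_iff_imp]
  rintro rfl
  exact ⟨⟨⟨b * c, by ring⟩, hN⟩, ⟨⟨a * c, by ring⟩, hN⟩, ⟨⟨a * b, by ring⟩, hN⟩⟩

lemma isSymmetricTripleSet_tripleFactorizations (N : ℕ) :
    IsSymmetricTripleSet (tripleFactorizations N) := by
  intro a b c h
  simp only [tripleFactorizations, mem_filter, mem_product] at h ⊢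
  obtain ⟨⟨ha, hb, hc⟩, h⟩ := h
  exact ⟨⟨⟨hb, ha, hc⟩, by rw [← h]; ring⟩, ⟨⟨ha, hc, hb⟩, by rw [← h]; ring⟩⟩

lemma cuboidCount_eq_card_filter_sorted {N : ℕ} (hN : N ≠ 0) :
    cuboidCount N =
      #((tripleFactorizations N).filter fun t => t.1 ≤ t.2.1 ∧ t.2.1 ≤ t.2.2) := by
  rw [cuboidCount, ← Set.ncard_coe_finset]
  congr 1
  ext ⟨a, b, c⟩
  simp only [Set.mem_ofPred_eq, coe_filter, mem_tripleFactorizations hN]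
  constructor
  · rintro ⟨-, hab, hbc, h⟩
    exact ⟨h, hab, hbc⟩
  · rintro ⟨h, hab, hbc⟩
    refine ⟨Nat.pos_of_ne_zero fun ha => hN ?_, hab, hbc, h⟩
    rw [← h, ha, zero_mul, zero_mul]

section TwoPrimes

variable {p q : ℕ}

lemma pow_mul_pow_inj (hp : p.Prime) (hq : q.Prime) (hpq : p ≠ q) {i j k l : ℕ} :
    p ^ i * q ^ j = p ^ k * q ^ l ↔ i = k ∧ j = l := by
  have hfact : ∀ i j, (p ^ i * q ^ j).factorization = Finsupp.single p i + Finsupp.single q j :=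
    fun i j => by
      rw [Nat.factorization_mul (pow_ne_zero _ hp.ne_zero) (pow_ne_zero _ hq.ne_zero),
        hp.factorization_pow, hq.factorization_pow]
  refine ⟨fun h => ?_, fun ⟨rfl, rfl⟩ => rfl⟩
  have h' := congrArg Nat.factorization h
  rw [hfact, hfact] at h'
  have hp' := DFunLike.congr_fun h' p
  have hq' := DFunLike.congr_fun h' q
  simp [hpq, hpq.symm] at hp' hq'
  exact ⟨hp', hq'⟩

lemma exists_eq_pow_mul_pow_of_dvd (hp : p.Prime) (hq : q.Prime) {n m d : ℕ}
    (hd : d ∣ p ^ n * q ^ m) : ∃ i ≤ n, ∃ j ≤ m, d = p ^ i * q ^ j := by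
  obtain ⟨d₁, d₂, hd₁, hd₂, rfl⟩ := Nat.dvd_mul.1 hd
  obtain ⟨i, hi, rfl⟩ := (Nat.dvd_prime_pow hp).1 hd₁
  obtain ⟨j, hj, rfl⟩ := (Nat.dvd_prime_pow hq).1 hd₂
  exact ⟨i, hi, j, hj, rfl⟩

def powMulPowTriple (p q : ℕ) (e : (ℕ × ℕ × ℕ) × (ℕ × ℕ × ℕ)) : ℕ × ℕ × ℕ :=
  (p ^ e.1.1 * q ^ e.2.1, p ^ e.1.2.1 * q ^ e.2.2.1, p ^ e.1.2.2 * q ^ e.2.2.2)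

lemma powMulPowTriple_prod (e : (ℕ × ℕ × ℕ) × (ℕ × ℕ × ℕ)) :
    (powMulPowTriple p q e).1 * (powMulPowTriple p q e).2.1 * (powMulPowTriple p q e).2.2 =
      p ^ (e.1.1 + e.1.2.1 + e.1.2.2) * q ^ (e.2.1 + e.2.2.1 + e.2.2.2) := by
  simp only [powMulPowTriple]
  ring

variable (hp : p.Prime) (hq : q.Prime) (hpq : p ≠ q)
include hp hq hpq

lemma powMulPowTriple_injective : Function.Injective (powMulPowTriple p q) := by
  rintro ⟨⟨a₁, a₂, a₃⟩, b₁, b₂, b₃⟩ ⟨⟨c₁, c₂, c₃⟩, d₁, d₂, d₃⟩ h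
  simp only [powMulPowTriple, Prod.mk.injEq, pow_mul_pow_inj hp hq hpq] at h ⊢
  omega

lemma tripleFactorizations_pow_mul_pow (n m : ℕ) :
    tripleFactorizations (p ^ n * q ^ m) =
      (sumTriples n ×ˢ sumTriples m).image (powMulPowTriple p q) := by
  have hN : p ^ n * q ^ m ≠ 0 := mul_ne_zero (pow_ne_zero _ hp.ne_zero) (pow_ne_zero _ hq.ne_zero)
  ext t
  simp only [mem_tripleFactorizations hN, mem_image, mem_product, mem_sumTriples]
  constructor
  · obtain ⟨A, B, C⟩ := t
    intro h
    have hA : A ∣ p ^ n * q ^ m := ⟨B * C, by rw [← h]; ring⟩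
    have hB : B ∣ p ^ n * q ^ m := ⟨A * C, by rw [← h]; ring⟩
    have hC : C ∣ p ^ n * q ^ m := ⟨A * B, by rw [← h]; ring⟩
    obtain ⟨a₁, -, b₁, -, rfl⟩ := exists_eq_pow_mul_pow_of_dvd hp hq hA
    obtain ⟨a₂, -, b₂, -, rfl⟩ := exists_eq_pow_mul_pow_of_dvd hp hq hB
    obtain ⟨a₃, -, b₃, -, rfl⟩ := exists_eq_pow_mul_pow_of_dvd hp hq hC
    have hsum := powMulPowTriple_prod (p := p) (q := q) ((a₁, a₂, a₃), (b₁, b₂, b₃))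
    rw [powMulPowTriple, h, pow_mul_pow_inj hp hq hpq] at hsum
    exact ⟨((a₁, a₂, a₃), (b₁, b₂, b₃)), ⟨hsum.1.symm, hsum.2.symm⟩, rfl⟩
  · rintro ⟨e, ⟨hn, hm⟩, rfl⟩
    rw [powMulPowTriple_prod, hn, hm]

lemma card_filter_tripleFactorizations_pow_mul_pow (n m : ℕ) (P : ℕ × ℕ × ℕ → Prop)
    [DecidablePred P] (hP : ∀ e, P (powMulPowTriple p q e) ↔ P e.1 ∧ P e.2) :
    #((tripleFactorizations (p ^ n * q ^ m)).filter P) =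
      #((sumTriples n).filter P) * #((sumTriples m).filter P) := by
  rw [tripleFactorizations_pow_mul_pow hp hq hpq, filter_image,
    card_image_of_injective _ (powMulPowTriple_injective hp hq hpq), ← card_product,
    ← filter_product]
  exact congrArg card (filter_congr fun e _ => hP e)

theorem six_mul_cuboidCount_pow_mul_pow {n : ℕ} (hn : ¬ 3 ∣ n) (m : ℕ) :
    6 * cuboidCount (p ^ n * q ^ m) =
      #(sumTriples n) * #(sumTriples m) + 3 * ((n / 2 + 1) * (m / 2 + 1)) := by
  have hN : p ^ n * q ^ m ≠ 0 := mul_ne_zero (pow_ne_zero _ hp.ne_zero) (pow_ne_zero _ hq.ne_zero)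
  have hburnside :=
    (isSymmetricTripleSet_tripleFactorizations (p ^ n * q ^ m)).card_add_eq_six_mul_card_sorted
  have hall := card_filter_tripleFactorizations_pow_mul_pow hp hq hpq n m (fun _ => True)
    (by simp)
  have hpair := card_filter_tripleFactorizations_pow_mul_pow hp hq hpq n m
    (fun t => t.1 = t.2.1) (by simp [powMulPowTriple, pow_mul_pow_inj hp hq hpq])
  have hconst := card_filter_tripleFactorizations_pow_mul_pow hp hq hpq n m
    (fun t => t.1 = t.2.1 ∧ t.2.1 = t.2.2)
    (by simp [powMulPowTriple, pow_mul_pow_inj hp hq hpq, and_and_and_comm])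
  simp only [filter_true] at hall
  rw [sumTriples_filter_const_eq_empty hn, card_empty, zero_mul] at hconst
  rw [hall, hpair, hconst, card_sumTriples_filter_fst_eq, card_sumTriples_filter_fst_eq,
    ← cuboidCount_eq_card_filter_sorted hN] at hburnside
  omega

end TwoPrimes

theorem cuboid_count_two_primes_general (p q n m : ℕ) (hp : p.Prime) (hq : q.Prime)
    (hpq : p ≠ q)
    (hnmod : n % 6 = 1 ∨ n % 6 = 5) (hmmod : m % 6 = 1 ∨ m % 6 = 3 ∨ m % 6 = 5) :
    (cuboidCount (p ^ n * q ^ m) : ℚ) = ((n : ℚ) + 1) * ((m : ℚ) + 1) * ((n : ℚ) * m + 2 * n + 2 * m + 7) / 24 := by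
  have hcount := six_mul_cuboidCount_pow_mul_pow hp hq hpq (n := n) (by omega) m
  generalize hu : n / 2 = u at hcount
  generalize hv : m / 2 = v at hcount
  have hu₂ : 2 * u + 1 = n := by omega
  have hv₂ : 2 * v + 1 = m := by omega
  have hn := card_sumTriples n
  have hm := card_sumTriples m
  qify at hcount hn hm hu₂ hv₂
  rw [eq_div_iff (by norm_num)]
  linear_combination 4 * hcount + 2 * (#(sumTriples m) : ℚ) * hn + ((n : ℚ) + 1) * (n + 2) * hm +
    3 * (2 * (v : ℚ) + 2) * hu₂ + 3 * ((n : ℚ) + 1) * hv₂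

theorem cuboid_count_two_primes (p q n m : ℕ) (hp : p.Prime) (hq : q.Prime)
    (hpq : p ≠ q) (hn : 0 < n) (hm : 0 < m)
    (hnmod : n % 6 = 1 ∨ n % 6 = 5) (hmmod : m % 6 = 1 ∨ m % 6 = 3 ∨ m % 6 = 5) :
    (cuboidCount (p ^ n * q ^ m) : ℚ) = ((n : ℚ) + 1) * ((m : ℚ) + 1) * ((n : ℚ) * m + 2 * n + 2 * m + 7) / 24 :=
  cuboid_count_two_primes_general p q n m hp hq hpq hnmod hmmod
end
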